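/- Let d ≥ 1. Suppose v : ℝ^d × (0,T) → ℝ^d is continuously differentiable with div v = 0 everywhere, φ, μ : ℝ^d × (0,T) → ℝ are twice continuously differentiable in space and continuously differentiable in time, M : ℝ → ℝ is continuously differentiable, and the phase-field equation ∂ₜφ + ⟨v,∇φ⟩ − div(M(φ)∇μ) = 0 holds pointwise. Set j := −M(φ)∇μ and ρ := ρ(φ) with the affine density function. Then the mass balance ∂ₜρ + div(ρ v + ρ′ j) = 0 holds pointwise on ℝ^d × (0,T). -/

import Mathlib

open MeasureTheory Set Matrix

noncomputable section

/-- Euclidean dot product on `Fin d → ℝ`. -/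
def dot {d : ℕ} (a b : Fin d → ℝ) : ℝ := ∑ i, a i * b i

/-- Spatial gradient of a scalar field. -/
def grad {d : ℕ} (f : (Fin d → ℝ) → ℝ) (x : Fin d → ℝ) : Fin d → ℝ :=
  fun i => fderiv ℝ f x (Pi.single i 1)

/-- Jacobian matrix `(∇v)_{ij} = ∂v_i/∂x_j` of a vector field. -/
def jac {d : ℕ} (v : (Fin d → ℝ) → Fin d → ℝ) (x : Fin d → ℝ) :
    Matrix (Fin d) (Fin d) ℝ := Matrix.of fun i j => fderiv ℝ v x (Pi.single j 1) i

/-- Divergence `div v = tr(∇v)` of a vector field. -/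
def divg {d : ℕ} (v : (Fin d → ℝ) → Fin d → ℝ) (x : Fin d → ℝ) : ℝ :=
  ∑ i, fderiv ℝ v x (Pi.single i 1) i

/-- Symmetrized gradient `Dv = (∇v + (∇v)ᵀ)/2`. -/
def symGrad {d : ℕ} (v : (Fin d → ℝ) → Fin d → ℝ) (x : Fin d → ℝ) :
    Matrix (Fin d) (Fin d) ℝ :=
  Matrix.of fun i j => (jac v x i j + jac v x j i) / 2

/-- Frobenius inner product of matrices. -/
def frob {d : ℕ} (A B : Matrix (Fin d) (Fin d) ℝ) : ℝ := ∑ i, ∑ j, A i j * B i j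

/-- Laplacian of a scalar field. -/
def lap {d : ℕ} (f : (Fin d → ℝ) → ℝ) (x : Fin d → ℝ) : ℝ :=
  ∑ i, fderiv ℝ (fun y => fderiv ℝ f y (Pi.single i 1)) x (Pi.single i 1)

/-- Affine mass density `ρ(s) = (ρ̂₂+ρ̂₁)/2 + (ρ̂₂-ρ̂₁)/2 · s`. -/
def rhoAff (ρ₁ ρ₂ s : ℝ) : ℝ := (ρ₂ + ρ₁) / 2 + (ρ₂ - ρ₁) / 2 * s

/-! Because `ρ` is affine, `∂ₜρ(φ) = ρ′ ∂ₜφ` and `∇ρ(φ) = ρ′ ∇φ`. The product rule gives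
`div(ρ(φ) v) = ρ(φ) div v + ⟨v, ∇ρ(φ)⟩ = ρ′ ⟨v, ∇φ⟩` for a solenoidal `v`, so the left-hand side of
the mass balance is `ρ′` times the left-hand side of the phase-field equation. -/

section

variable {d : ℕ} {x : Fin d → ℝ}

theorem dot_smul_right (a b : Fin d → ℝ) (c : ℝ) : dot a (c • b) = c * dot a b := by
  simp only [dot, Pi.smul_apply, smul_eq_mul, Finset.mul_sum]
  exact Finset.sum_congr rfl fun i _ => by ring

theorem ContDiff.differentiable_grad {f : (Fin d → ℝ) → ℝ} {n : WithTop ℕ∞}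
    (hf : ContDiff ℝ n f) (hn : 2 ≤ n) (k : Fin d) : Differentiable ℝ fun y => grad f y k :=
  ((hf.fderiv_right (m := 1) hn).clm_apply contDiff_const).differentiable one_ne_zero

theorem divg_add {v w : (Fin d → ℝ) → Fin d → ℝ} (hv : DifferentiableAt ℝ v x)
    (hw : DifferentiableAt ℝ w x) :
    divg (fun y k => v y k + w y k) x = divg v x + divg w x := by
  change ∑ i, fderiv ℝ (fun y => v y + w y) x _ i = _
  rw [fderiv_fun_add hv hw]
  exact Finset.sum_add_distrib

theorem divg_const_mul (c : ℝ) (v : (Fin d → ℝ) → Fin d → ℝ) :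
    divg (fun y k => c * v y k) x = c * divg v x := by
  change ∑ i, fderiv ℝ (c • v) x _ i = _
  rw [fderiv_const_smul_field, divg, Finset.mul_sum]
  rfl

theorem divg_neg (v : (Fin d → ℝ) → Fin d → ℝ) : divg (fun y k => -v y k) x = -divg v x := by
  change ∑ i, fderiv ℝ (fun y => -v y) x _ i = _
  rw [fderiv_fun_neg, divg, ← Finset.sum_neg_distrib]
  rfl

theorem divg_mul {f : (Fin d → ℝ) → ℝ} {v : (Fin d → ℝ) → Fin d → ℝ}
    (hf : DifferentiableAt ℝ f x) (hv : DifferentiableAt ℝ v x) :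
    divg (fun y k => f y * v y k) x = f x * divg v x + dot (v x) (grad f x) := by
  change ∑ i, fderiv ℝ (fun y => f y • v y) x _ i = _
  rw [fderiv_fun_smul hf hv]
  simp only [_root_.add_apply, _root_.smul_apply, ContinuousLinearMap.smulRight_apply,
    Pi.add_apply, Pi.smul_apply, smul_eq_mul, mul_comm, Finset.sum_add_distrib, divg,
    Finset.mul_sum, dot, grad]

theorem divg_eq_sum_fderiv_apply {v : (Fin d → ℝ) → Fin d → ℝ}
    (hv : DifferentiableAt ℝ v x) :
    divg v x = ∑ i, fderiv ℝ (fun y => v y i) x (Pi.single i 1) :=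
  Finset.sum_congr rfl fun i _ => (congrArg (· (Pi.single i 1))
    ((hasFDerivAt_apply i (v x)).comp x hv.hasFDerivAt).fderiv).symm

theorem deriv_rhoAff_comp (ρ₁ ρ₂ : ℝ) (f : ℝ → ℝ) (t : ℝ) :
    deriv (fun s => rhoAff ρ₁ ρ₂ (f s)) t = (ρ₂ - ρ₁) / 2 * deriv f t := by
  simp only [rhoAff, deriv_const_add, deriv_const_mul_field]

theorem grad_rhoAff_comp (ρ₁ ρ₂ : ℝ) (f : (Fin d → ℝ) → ℝ) :
    grad (fun y => rhoAff ρ₁ ρ₂ (f y)) x = ((ρ₂ - ρ₁) / 2) • grad f x := by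
  ext i
  change fderiv ℝ (fun y => _ + (((ρ₂ - ρ₁) / 2) • f) y) x _ = _
  rw [fderiv_const_add, fderiv_const_smul_field]
  rfl

end

theorem mass_balance_general
    {d : ℕ} {T : ℝ}
    {ρ₁ ρ₂ : ℝ}
    (M : ℝ → ℝ) (hM : ContDiff ℝ 1 M)
    (v : ℝ → (Fin d → ℝ) → Fin d → ℝ) (φ μ : ℝ → (Fin d → ℝ) → ℝ)
    (hv : ContDiff ℝ 1 fun q : ℝ × (Fin d → ℝ) => v q.1 q.2)
    -- φ and μ are twice continuously differentiable in space and
    -- continuously differentiable in time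
    (hφx : ∀ t, ContDiff ℝ 2 (φ t))
    (hμx : ∀ t, ContDiff ℝ 2 (μ t))
    -- incompressibility everywhere
    (hdiv : ∀ t x, divg (v t) x = 0)
    -- phase-field equation: ∂ₜφ + ⟨v,∇φ⟩ − div(M(φ)∇μ) = 0
    (hph : ∀ t ∈ Ioo (0:ℝ) T, ∀ x,
      deriv (fun s => φ s x) t + dot (v t x) (grad (φ t) x)
        - (∑ k, fderiv ℝ (fun y => M (φ t y) * grad (μ t) y k) x (Pi.single k 1)) = 0) :
    ∀ t ∈ Ioo (0:ℝ) T, ∀ x,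
      deriv (fun s => rhoAff ρ₁ ρ₂ (φ s x)) t
        + divg (fun y => fun k => rhoAff ρ₁ ρ₂ (φ t y) * v t y k
            + (ρ₂ - ρ₁) / 2 * (-(M (φ t y) * grad (μ t) y k))) x = 0 := by
  intro t ht x
  have hφ : Differentiable ℝ (φ t) := (hφx t).differentiable two_ne_zero
  have hvt : Differentiable ℝ (v t) :=
    (hv.differentiable one_ne_zero).comp ((differentiable_const t).prodMk differentiable_id)
  have hρ : Differentiable ℝ fun y => rhoAff ρ₁ ρ₂ (φ t y) := by unfold rhoAff; fun_prop
  have hflux : Differentiable ℝ fun y k => M (φ t y) * grad (μ t) y k := fun y =>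
    differentiableAt_pi.2 fun k =>
      (((hM.differentiable one_ne_zero).comp hφ).mul ((hμx t).differentiable_grad le_rfl k)) y
  have hmass : Differentiable ℝ fun y k => rhoAff ρ₁ ρ₂ (φ t y) * v t y k := fun y =>
    differentiableAt_pi.2 fun k => (hρ.mul fun y => differentiableAt_pi.1 (hvt y) k) y
  have hdiffusive :
      DifferentiableAt ℝ (fun y k => (ρ₂ - ρ₁) / 2 * -(M (φ t y) * grad (μ t) y k)) x :=
    ((hflux x).neg).const_smul ((ρ₂ - ρ₁) / 2)
  have hphase := hph t ht x
  rw [← divg_eq_sum_fderiv_apply (hflux x)] at hphase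
  rw [deriv_rhoAff_comp, divg_add (hmass x) hdiffusive, divg_mul (hρ x) (hvt x), divg_const_mul,
    divg_neg, grad_rhoAff_comp, dot_smul_right, hdiv]
  linear_combination (ρ₂ - ρ₁) / 2 * hphase

/-- Pointwise mass balance `∂ₜρ + div(ρv + ρ′j) = 0` with mass flux including
the diffusive contribution `ρ′j = −ρ′M(φ)∇μ`, satisfied by the model of
Abels, Garcke and Grün. -/
theorem mass_balance
    {d : ℕ} (hd : 1 ≤ d) {T : ℝ} (hT : 0 < T)
    {ρ₁ ρ₂ : ℝ} (hρ₁ : 0 < ρ₁) (hρ₂ : 0 < ρ₂)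
    (M : ℝ → ℝ) (hM : ContDiff ℝ 1 M)
    (v : ℝ → (Fin d → ℝ) → Fin d → ℝ) (φ μ : ℝ → (Fin d → ℝ) → ℝ)
    (hv : ContDiff ℝ 1 fun q : ℝ × (Fin d → ℝ) => v q.1 q.2)
    -- φ and μ are twice continuously differentiable in space and
    -- continuously differentiable in time
    (hφx : ∀ t, ContDiff ℝ 2 (φ t)) (hφt : ∀ x, ContDiff ℝ 1 fun s => φ s x)
    (hμx : ∀ t, ContDiff ℝ 2 (μ t)) (hμt : ∀ x, ContDiff ℝ 1 fun s => μ s x)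
    -- incompressibility everywhere
    (hdiv : ∀ t x, divg (v t) x = 0)
    -- phase-field equation: ∂ₜφ + ⟨v,∇φ⟩ − div(M(φ)∇μ) = 0
    (hph : ∀ t ∈ Ioo (0:ℝ) T, ∀ x,
      deriv (fun s => φ s x) t + dot (v t x) (grad (φ t) x)
        - (∑ k, fderiv ℝ (fun y => M (φ t y) * grad (μ t) y k) x (Pi.single k 1)) = 0) :
    ∀ t ∈ Ioo (0:ℝ) T, ∀ x,
      deriv (fun s => rhoAff ρ₁ ρ₂ (φ s x)) t
        + divg (fun y => fun k => rhoAff ρ₁ ρ₂ (φ t y) * v t y k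
            + (ρ₂ - ρ₁) / 2 * (-(M (φ t y) * grad (μ t) y k))) x = 0 :=
  mass_balance_general M hM v φ μ hv hφx hμx hdiv hph
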